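/- Let D be a complete, cocomplete, extremally co-well-powered, (extremal epi, mono) category. Let {(X_i, Q_i)}_{i∈I} be a class of reduced projectively filtered objects of D and let (X, (f_i)_{i∈I}) be a sink for the underlying objects (so f_i : X_i → X in D). Then the class Q' of all morphisms g with source X such that g ∘ f_i ∈ Q_i for every i ∈ I is a reduced projective filtration on X such that: (1) each f_i lifts to a QD-morphism (X_i, Q_i) → (X, Q'); and (2) for every reduced projectively filtered object (Y, Q'') and every morphism h : X → Y of D, h lifts to a QD-morphism (X, Q') → (Y, Q'') if and only if each h ∘ f_i lifts to a QD-morphism (X_i, Q_i) → (Y, Q''). -/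

import Mathlib

/-!
In an (extremal epi, mono) category a projective filtration is reduced exactly when it is closed
under cancelling monomorphisms `g ≫ m ↦ g`: one direction is the diagonal fill-in against an
extremal epimorphism of the filtration, the other takes the extremal epimorphism part of each
element. The class `Q'` is the intersection of the push forwards of the `Qᵢ` along the `fᵢ`; the
terminal object and binary products make it nonempty and directed, and push forward and
intersection visibly preserve closure under cancelling monomorphisms. The lifting properties are
then a reordering of quantifiers.
-/

open CategoryTheory CategoryTheory.Limits

universe w v u v₂ u₂

namespace FilteredCats

variable {D : Type u} [Category.{v} D]

/-- The class of morphisms of `D` with source `X`. -/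
def MorFrom (X : D) : Type (max u v) := Σ Y : D, X ⟶ Y

/-- `Dom δ₁ δ₂` means `δ₁ ≥ δ₂`: there is `h` with `h ∘ δ₁ = δ₂`. -/
def Dom {X : D} (δ₁ δ₂ : MorFrom X) : Prop :=
  ∃ h : δ₁.1 ⟶ δ₂.1, δ₁.2 ≫ h = δ₂.2

/-- A projective filtration on `X`: a nonempty, directed, saturated class of
morphisms with source `X`. -/
structure ProjFilt (X : D) where
  carrier : Set (MorFrom X)
  nonempty' : carrier.Nonempty
  directed' : ∀ δ₁ ∈ carrier, ∀ δ₂ ∈ carrier, ∃ δ ∈ carrier, Dom δ δ₁ ∧ Dom δ δ₂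
  saturated' : ∀ δ₁ ∈ carrier, ∀ δ₂, Dom δ₁ δ₂ → δ₂ ∈ carrier

/-- The pull back of a set of morphisms with source `X` along `f : X' ⟶ X`. -/
def pullSet {X' X : D} (f : X' ⟶ X) (S : Set (MorFrom X)) : Set (MorFrom X') :=
  {δ' | ∃ δ ∈ S, δ' = ⟨δ.1, f ≫ δ.2⟩}

/-- The pull back of a projective filtration along `f : X' ⟶ X`. -/
def ProjFilt.pull {X' X : D} (f : X' ⟶ X) (P : ProjFilt X) : ProjFilt X' where
  carrier := pullSet f P.carrier
  nonempty' := by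
    obtain ⟨δ, hδ⟩ := P.nonempty'
    exact ⟨⟨δ.1, f ≫ δ.2⟩, δ, hδ, rfl⟩
  directed' := by
    rintro _ ⟨δ₁, h₁, rfl⟩ _ ⟨δ₂, h₂, rfl⟩
    obtain ⟨δ, hδ, ⟨g₁, hg₁⟩, ⟨g₂, hg₂⟩⟩ := P.directed' δ₁ h₁ δ₂ h₂
    exact ⟨⟨δ.1, f ≫ δ.2⟩, ⟨δ, hδ, rfl⟩,
      ⟨g₁, by simp [hg₁]⟩, ⟨g₂, by simp [hg₂]⟩⟩
  saturated' := by
    rintro _ ⟨δ, hδ, rfl⟩ δ₂ ⟨h, hh⟩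
    refine ⟨⟨δ₂.1, δ.2 ≫ h⟩, P.saturated' δ hδ _ ⟨h, rfl⟩, ?_⟩
    obtain ⟨Y₂, g₂⟩ := δ₂
    have hg : g₂ = f ≫ (δ.2 ≫ h) := by simpa using hh.symm
    exact Sigma.ext rfl (heq_of_eq hg)

/-- A projectively filtered object of `D`. -/
structure PObj (D : Type u) [Category.{v} D] where
  base : D
  filt : ProjFilt base

/-- A morphism of projectively filtered objects: a morphism of the underlying
objects such that the pull back of the target filtration is contained in the
source filtration. -/
structure PHom (A B : PObj D) : Type v where
  toHom : A.base ⟶ B.base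
  mem : ∀ δ ∈ B.filt.carrier, (⟨δ.1, toHom ≫ δ.2⟩ : MorFrom A.base) ∈ A.filt.carrier

theorem PHom.ext' {A B : PObj D} {f g : PHom A B} (h : f.toHom = g.toHom) : f = g := by
  cases f; cases g; cases h; rfl

instance : Category.{v} (PObj D) where
  Hom := PHom
  id A := ⟨𝟙 A.base, fun δ hδ => by rw [Category.id_comp]; exact hδ⟩
  comp {A B C} f g := ⟨f.toHom ≫ g.toHom, fun δ hδ => by
    have h1 := g.mem δ hδ
    have h2 := f.mem _ h1
    simpa using h2⟩
  id_comp f := PHom.ext' (Category.id_comp _)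
  comp_id f := PHom.ext' (Category.comp_id _)
  assoc f g h := PHom.ext' (Category.assoc _ _ _)

@[simp] theorem PObj.id_toHom (A : PObj D) : PHom.toHom (𝟙 A) = 𝟙 A.base := rfl
@[simp] theorem PObj.comp_toHom {A B C : PObj D} (f : A ⟶ B) (g : B ⟶ C) :
    PHom.toHom (f ≫ g) = PHom.toHom f ≫ PHom.toHom g := rfl

/-- The forgetful functor `PD → D`. -/
def Pforget (D : Type u) [Category.{v} D] : PObj D ⥤ D where
  obj A := A.base
  map f := PHom.toHom f

/-- The discrete filtration functor `D → PD`, `X ↦ (X, M(X))`. -/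
def Pdiscrete (D : Type u) [Category.{v} D] : D ⥤ PObj D where
  obj X :=
    { base := X
      filt :=
        { carrier := Set.univ
          nonempty' := ⟨⟨X, 𝟙 X⟩, trivial⟩
          directed' := fun δ₁ _ δ₂ _ =>
            ⟨⟨X, 𝟙 X⟩, trivial, ⟨δ₁.2, Category.id_comp _⟩, ⟨δ₂.2, Category.id_comp _⟩⟩
          saturated' := fun _ _ _ _ => trivial } }
  map f := ⟨f, fun _ _ => trivial⟩

/-- The functor `PD → PE` induced by a functor `G : D → E`. -/
def Pfunctor {E : Type u₂} [Category.{v₂} E] (G : D ⥤ E) : PObj D ⥤ PObj E where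
  obj A :=
    { base := G.obj A.base
      filt :=
        { carrier := {δ' | ∃ δ ∈ A.filt.carrier,
            Dom (⟨G.obj δ.1, G.map δ.2⟩ : MorFrom (G.obj A.base)) δ'}
          nonempty' := by
            obtain ⟨δ, hδ⟩ := A.filt.nonempty'
            exact ⟨⟨G.obj δ.1, G.map δ.2⟩, δ, hδ, ⟨𝟙 _, Category.comp_id _⟩⟩
          directed' := by
            rintro δ'₁ ⟨δ₁, h₁, g₁, hg₁⟩ δ'₂ ⟨δ₂, h₂, g₂, hg₂⟩
            obtain ⟨δ, hδ, ⟨k₁, hk₁⟩, ⟨k₂, hk₂⟩⟩ := A.filt.directed' δ₁ h₁ δ₂ h₂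
            refine ⟨⟨G.obj δ.1, G.map δ.2⟩, ⟨δ, hδ, ⟨𝟙 _, Category.comp_id _⟩⟩,
              ⟨G.map k₁ ≫ g₁, ?_⟩, ⟨G.map k₂ ≫ g₂, ?_⟩⟩
            · rw [← Category.assoc, ← G.map_comp, hk₁, hg₁]
            · rw [← Category.assoc, ← G.map_comp, hk₂, hg₂]
          saturated' := by
            rintro δ'₁ ⟨δ, hδ, g, hg⟩ δ'₂ ⟨h, hh⟩
            exact ⟨δ, hδ, ⟨g ≫ h, by rw [← Category.assoc, hg, hh]⟩⟩ } }
  map {A B} f :=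
    ⟨G.map (PHom.toHom f), by
      rintro δ' ⟨δ, hδ, g, hg⟩
      exact ⟨⟨δ.1, PHom.toHom f ≫ δ.2⟩, f.mem δ hδ,
        ⟨g, by rw [← hg, ← Category.assoc, ← G.map_comp]⟩⟩⟩
  map_id A := PHom.ext' (G.map_id _)
  map_comp f g := PHom.ext' (G.map_comp _ _)

/-- An extremal epimorphism: an epimorphism such that in any factorisation
through a monomorphism, the monomorphism is an isomorphism. -/
def ExtremalEpi {C : Type u₂} [Category.{v₂} C] {X Y : C} (e : X ⟶ Y) : Prop :=
  Epi e ∧ ∀ ⦃Z : C⦄ (g : X ⟶ Z) (m : Z ⟶ Y), Mono m → g ≫ m = e → IsIso m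

/-- An (extremal epi, mono) category: every morphism factors as an extremal
epimorphism followed by a monomorphism and such factorisations have the
diagonal fill-in property. -/
structure EMCat (C : Type u₂) [Category.{v₂} C] : Prop where
  fact : ∀ {X Y : C} (f : X ⟶ Y), ∃ (Z : C) (e : X ⟶ Z) (m : Z ⟶ Y),
    ExtremalEpi e ∧ Mono m ∧ e ≫ m = f
  diag : ∀ {A B Z X : C} (e : A ⟶ B) (m : Z ⟶ X) (g : A ⟶ Z) (h : B ⟶ X),
    ExtremalEpi e → Mono m → g ≫ m = e ≫ h → ∃ d : B ⟶ Z, e ≫ d = g ∧ d ≫ m = h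

/-- A projective filtration is reduced if it has an initial subclass of
extremal epimorphisms. -/
def ProjFilt.Reduced {X : D} (P : ProjFilt X) : Prop :=
  ∀ δ ∈ P.carrier, ∃ ε ∈ P.carrier, ExtremalEpi ε.2 ∧ Dom ε δ

/-- The category of reduced projectively filtered objects of `D`. -/
def QObj (D : Type u) [Category.{v} D] := ObjectProperty.FullSubcategory (fun A : PObj D => A.filt.Reduced)

instance : Category.{v} (QObj D) := ObjectProperty.FullSubcategory.category _

/-- The inclusion functor `QD → PD`. -/
def qpInclusion (D : Type u) [Category.{v} D] : QObj D ⥤ PObj D :=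
  ObjectProperty.ι _

/-- A category is extremally co-well-powered if every object has, up to
isomorphism, only a (small) set of extremal epimorphisms out of it. -/
def ECWP (C : Type u₂) [Category.{v₂} C] : Prop :=
  ∀ X : C, ∃ (ι : Type v₂) (Y : ι → C) (e : ∀ i, X ⟶ Y i),
    (∀ i, ExtremalEpi (e i)) ∧
    ∀ ⦃Z : C⦄ (f : X ⟶ Z), ExtremalEpi f → ∃ (i : ι) (φ : Y i ≅ Z), e i ≫ φ.hom = f

/-- The category `(P, D)` associated to a projective filtration: objects are the
elements of `P`, morphisms `δ₁ → δ₂` are morphisms `g` of `D` with `g ∘ δ₁ = δ₂`. -/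
def FiltCat {X : D} (P : ProjFilt X) : Type (max u v) := {δ : MorFrom X // δ ∈ P.carrier}

instance {X : D} (P : ProjFilt X) : Category.{v} (FiltCat P) where
  Hom δ₁ δ₂ := {g : δ₁.1.1 ⟶ δ₂.1.1 // δ₁.1.2 ≫ g = δ₂.1.2}
  id δ := ⟨𝟙 _, Category.comp_id _⟩
  comp f g := ⟨f.1 ≫ g.1, by rw [← Category.assoc, f.2, g.2]⟩
  id_comp f := Subtype.ext (Category.id_comp _)
  comp_id f := Subtype.ext (Category.comp_id _)
  assoc f g h := Subtype.ext (Category.assoc _ _ _)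

/-- The functor `(P, D) → D` sending an element of the filtration to its target. -/
def FiltDiagram {X : D} (P : ProjFilt X) : FiltCat P ⥤ D where
  obj δ := δ.1.1
  map g := g.1

/-- The canonical cone on the diagram of a projective filtration, with apex the
underlying object. -/
def filtCone {X : D} (P : ProjFilt X) : Limits.Cone (FiltDiagram P) where
  pt := X
  π :=
    { app := fun δ => δ.1.2
      naturality := fun δ₁ δ₂ g => by
        have := g.2
        dsimp [FiltDiagram] at *
        simp [this] }

/-- A reduced projective filtration is an iso-filtration if the canonical cone
on its diagram is a limit cone, i.e. the limit exists and the canonical morphism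
from the underlying object to it is an isomorphism. -/
def IsoFilt {X : D} (P : ProjFilt X) : Prop :=
  Nonempty (Limits.IsLimit (filtCone P))

/-- The category of iso-filtered objects of `D`. -/
def KObj (D : Type u) [Category.{v} D] :=
  ObjectProperty.FullSubcategory (fun A : QObj D => IsoFilt A.obj.filt)

instance : Category.{v} (KObj D) := ObjectProperty.FullSubcategory.category _

/-- The inclusion functor `KD → QD`. -/
def kqInclusion (D : Type u) [Category.{v} D] : KObj D ⥤ QObj D :=
  ObjectProperty.ι _

/-- The forgetful functor `KD → D`. -/
def Kforget (D : Type u) [Category.{v} D] : KObj D ⥤ D :=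
  kqInclusion D ⋙ qpInclusion D ⋙ Pforget D

/-- The smallest projective filtration containing a class of morphisms
(as a class). -/
def genSet {X : D} (S : Set (MorFrom X)) : Set (MorFrom X) :=
  {δ | ∀ P : ProjFilt X, S ⊆ P.carrier → δ ∈ P.carrier}

/-- The reduction of a class of morphisms: the saturation of the class of
extremal epimorphism parts of (extremal epi, mono)-factorisations of its
elements. -/
def redSet {X : D} (S : Set (MorFrom X)) : Set (MorFrom X) :=
  {δ | ∃ ε : MorFrom X, ExtremalEpi ε.2 ∧
    (∃ δ' ∈ S, ∃ m : ε.1 ⟶ δ'.1, Mono m ∧ ε.2 ≫ m = δ'.2) ∧ Dom ε δ}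

/-- The push forward of a filtration class along `f` (single morphism case). -/
def pushSet {X Y : D} (f : X ⟶ Y) (S : Set (MorFrom X)) : Set (MorFrom Y) :=
  {g | (⟨g.1, f ≫ g.2⟩ : MorFrom X) ∈ S}

/-- The discrete filtration on an object, as an iso-filtered object. -/
def kDiscreteObj (X : D) : KObj D where
  obj :=
    { obj := (Pdiscrete D).obj X
      property := fun δ _ => ⟨⟨X, 𝟙 X⟩, trivial,
        ⟨(inferInstance : Epi (𝟙 X)), fun _ g m hm hgm => by
          haveI : IsSplitEpi m := ⟨⟨⟨g, hgm⟩⟩⟩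
          exact isIso_of_mono_of_isSplitEpi m⟩,
        ⟨δ.2, Category.id_comp _⟩⟩ }
  property := ⟨{
    lift := fun c => c.π.app ⟨⟨X, 𝟙 X⟩, trivial⟩
    fac := fun c j => by
      have h := c.π.naturality (X := ⟨⟨X, 𝟙 X⟩, trivial⟩) (Y := j)
        ⟨j.1.2, Category.id_comp _⟩
      dsimp [FiltDiagram, filtCone] at h ⊢
      exact h.symm.trans (Category.id_comp _)
    uniq := fun c m hm => by
      have h := hm ⟨⟨X, 𝟙 X⟩, trivial⟩
      rw [← Category.comp_id m]
      exact h }⟩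

/-- The discrete filtration functor `D → KD`. -/
def kDiscrete (D : Type u) [Category.{v} D] : D ⥤ KObj D where
  obj X := kDiscreteObj X
  map f := InducedCategory.homMk (InducedCategory.homMk ⟨f, fun _ _ => trivial⟩)
  map_id _ := InducedCategory.hom_ext (InducedCategory.hom_ext (PHom.ext' rfl))
  map_comp _ _ := InducedCategory.hom_ext (InducedCategory.hom_ext (PHom.ext' rfl))

/-- The morphism in `KD` from an iso-filtered object to the discrete object on
the target of an element of its filtration. -/
def kToDiscrete {A : KObj D} (δ : MorFrom A.obj.obj.base)
    (hδ : δ ∈ A.obj.obj.filt.carrier) : A ⟶ kDiscreteObj δ.1 :=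
  InducedCategory.homMk (InducedCategory.homMk (show PHom A.obj.obj ((kDiscreteObj δ.1).obj.obj) from
    ⟨δ.2, fun γ _ => A.obj.obj.filt.saturated' δ hδ _ ⟨γ.2, rfl⟩⟩))

/-- The natural transformation `P(G) → P(H)` induced by `ν : G → H`. -/
def Pnat {E : Type u₂} [Category.{v₂} E] {G H : D ⥤ E} (ν : G ⟶ H) :
    Pfunctor G ⟶ Pfunctor H where
  app A :=
    ⟨ν.app A.base, by
      rintro δ' ⟨δ, hδ, g, hg⟩
      exact ⟨δ, hδ, ⟨ν.app δ.1 ≫ g, by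
        rw [← Category.assoc, ν.naturality, Category.assoc, hg]; rfl⟩⟩⟩
  naturality {A B} f := PHom.ext' (ν.naturality (PHom.toHom f))

namespace ProjFilt

variable {X : D}

theorem terminal_mem [HasTerminal D] (P : ProjFilt X) :
    (⟨⊤_ D, terminal.from X⟩ : MorFrom X) ∈ P.carrier := by
  obtain ⟨δ, hδ⟩ := P.nonempty'
  exact P.saturated' δ hδ _ ⟨terminal.from δ.1, terminal.hom_ext _ _⟩

theorem prod_lift_mem [HasBinaryProducts D] (P : ProjFilt X) {δ₁ δ₂ : MorFrom X}
    (h₁ : δ₁ ∈ P.carrier) (h₂ : δ₂ ∈ P.carrier) :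
    (⟨δ₁.1 ⨯ δ₂.1, prod.lift δ₁.2 δ₂.2⟩ : MorFrom X) ∈ P.carrier := by
  obtain ⟨ε, hε, ⟨k₁, hk₁⟩, ⟨k₂, hk₂⟩⟩ := P.directed' δ₁ h₁ δ₂ h₂
  exact P.saturated' ε hε _ ⟨prod.lift k₁ k₂, by rw [prod.comp_lift, hk₁, hk₂]⟩

def CancelsMono (P : ProjFilt X) : Prop :=
  ∀ ⦃Y Z : D⦄ (g : X ⟶ Z) (m : Z ⟶ Y), Mono m →
    (⟨Y, g ≫ m⟩ : MorFrom X) ∈ P.carrier → (⟨Z, g⟩ : MorFrom X) ∈ P.carrier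

theorem reduced_iff_cancelsMono (hEM : EMCat D) (P : ProjFilt X) :
    P.Reduced ↔ P.CancelsMono := by
  constructor
  · -- fill in the square from an extremal epimorphism of `P` below `g ≫ m`
    intro hP Y Z g m hm h
    obtain ⟨ε, hε, hext, k, hk⟩ := hP _ h
    obtain ⟨d, hd, -⟩ := hEM.diag ε.2 m g k hext hm hk.symm
    exact P.saturated' ε hε _ ⟨d, hd⟩
  · -- the extremal epimorphism part of `δ` lies in `P`
    rintro hP ⟨Y, δ⟩ hδ
    obtain ⟨Z, e, m, he, hm, rfl⟩ := hEM.fact δ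
    exact ⟨⟨Z, e⟩, hP e m hm hδ, he, m, rfl⟩

section Limits

variable [HasTerminal D] [HasBinaryProducts D]

def push {Y : D} (f : X ⟶ Y) (P : ProjFilt X) : ProjFilt Y where
  carrier := pushSet f P.carrier
  nonempty' := ⟨⟨⊤_ D, terminal.from Y⟩, by
    show (⟨_, f ≫ terminal.from Y⟩ : MorFrom X) ∈ P.carrier
    rw [terminal.comp_from]
    exact P.terminal_mem⟩
  directed' δ₁ h₁ δ₂ h₂ :=
    ⟨⟨δ₁.1 ⨯ δ₂.1, prod.lift δ₁.2 δ₂.2⟩,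
      by show (⟨_, f ≫ prod.lift δ₁.2 δ₂.2⟩ : MorFrom X) ∈ P.carrier
         rw [prod.comp_lift]
         exact P.prod_lift_mem h₁ h₂,
      ⟨prod.fst, prod.lift_fst _ _⟩, ⟨prod.snd, prod.lift_snd _ _⟩⟩
  saturated' := by
    rintro δ₁ h₁ δ₂ ⟨k, hk⟩
    exact P.saturated' _ h₁ _ ⟨k, by rw [Category.assoc, hk]⟩

def iInf {ι : Type w} (P : ι → ProjFilt X) : ProjFilt X where
  carrier := ⋂ i, (P i).carrier
  nonempty' := ⟨_, Set.mem_iInter.2 fun i => (P i).terminal_mem⟩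
  directed' δ₁ h₁ δ₂ h₂ :=
    ⟨⟨δ₁.1 ⨯ δ₂.1, prod.lift δ₁.2 δ₂.2⟩,
      Set.mem_iInter.2 fun i =>
        (P i).prod_lift_mem (Set.mem_iInter.1 h₁ i) (Set.mem_iInter.1 h₂ i),
      ⟨prod.fst, prod.lift_fst _ _⟩, ⟨prod.snd, prod.lift_snd _ _⟩⟩
  saturated' δ₁ h₁ δ₂ h :=
    Set.mem_iInter.2 fun i => (P i).saturated' δ₁ (Set.mem_iInter.1 h₁ i) δ₂ h

theorem mem_iInf {ι : Type w} {P : ι → ProjFilt X} {δ : MorFrom X} :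
    δ ∈ (iInf P).carrier ↔ ∀ i, δ ∈ (P i).carrier :=
  Set.mem_iInter

theorem CancelsMono.push {W : D} {P : ProjFilt X} (hP : P.CancelsMono) (f : X ⟶ W) :
    (P.push f).CancelsMono := by
  intro Y Z g m hm h
  exact hP (f ≫ g) m hm (by rw [Category.assoc]; exact h)

theorem CancelsMono.iInf {ι : Type w} {P : ι → ProjFilt X} (hP : ∀ i, (P i).CancelsMono) :
    (ProjFilt.iInf P).CancelsMono :=
  fun _ _ g m hm h => mem_iInf.2 fun i => hP i g m hm (mem_iInf.1 h i)

end Limits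

end ProjFilt

theorem push_forward_filtration_general [Limits.HasLimits D]
    (hEM : EMCat D)
    {ι : Type w} (A : ι → PObj D) (hA : ∀ i, (A i).filt.Reduced)
    (X : D) (f : ∀ i, (A i).base ⟶ X) :
    ∃ Q' : ProjFilt X,
      Q'.carrier = {g : MorFrom X |
        ∀ i, (⟨g.1, f i ≫ g.2⟩ : MorFrom (A i).base) ∈ (A i).filt.carrier} ∧
      Q'.Reduced ∧
      (∀ i, ∀ δ ∈ Q'.carrier,
        (⟨δ.1, f i ≫ δ.2⟩ : MorFrom (A i).base) ∈ (A i).filt.carrier) ∧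
      (∀ (Y : D) (Q'' : ProjFilt Y), Q''.Reduced → ∀ h : X ⟶ Y,
        ((∀ δ ∈ Q''.carrier, (⟨δ.1, h ≫ δ.2⟩ : MorFrom X) ∈ Q'.carrier) ↔
          (∀ i, ∀ δ ∈ Q''.carrier,
            (⟨δ.1, (f i ≫ h) ≫ δ.2⟩ : MorFrom (A i).base) ∈ (A i).filt.carrier))) := by
  let Q' := ProjFilt.iInf fun i => (A i).filt.push (f i)
  have hQ'_reduced : Q'.Reduced :=
    (Q'.reduced_iff_cancelsMono hEM).2 <| ProjFilt.CancelsMono.iInf fun i =>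
      (((A i).filt.reduced_iff_cancelsMono hEM).1 (hA i)).push (f i)
  refine ⟨Q', Set.ext fun _ => ProjFilt.mem_iInf, hQ'_reduced,
    fun i δ hδ => ProjFilt.mem_iInf.1 hδ i, fun Y Q'' _ h => ?_⟩
  simp only [Category.assoc]
  exact ⟨fun hh i δ hδ => ProjFilt.mem_iInf.1 (hh δ hδ) i,
    fun hh δ hδ => ProjFilt.mem_iInf.2 fun i => hh i δ hδ⟩

/-- push forward filtrations along a sink.  The class of all
morphisms `g` out of `X` with `g ∘ fᵢ ∈ Qᵢ` for all `i` is a reduced projective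
filtration `Q'` on `X`; each `fᵢ` lifts to a `QD`-morphism `(Xᵢ,Qᵢ) → (X,Q')`,
and a morphism `h : X → Y` to a reduced filtered object lifts to a
`QD`-morphism `(X,Q') → (Y,Q'')` iff each `h ∘ fᵢ` lifts. -/
theorem push_forward_filtration [Limits.HasLimits D] [Limits.HasColimits D]
    (hecwp : ECWP D) (hEM : EMCat D)
    {ι : Type w} (A : ι → PObj D) (hA : ∀ i, (A i).filt.Reduced)
    (X : D) (f : ∀ i, (A i).base ⟶ X) :
    ∃ Q' : ProjFilt X,
      Q'.carrier = {g : MorFrom X |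
        ∀ i, (⟨g.1, f i ≫ g.2⟩ : MorFrom (A i).base) ∈ (A i).filt.carrier} ∧
      Q'.Reduced ∧
      (∀ i, ∀ δ ∈ Q'.carrier,
        (⟨δ.1, f i ≫ δ.2⟩ : MorFrom (A i).base) ∈ (A i).filt.carrier) ∧
      (∀ (Y : D) (Q'' : ProjFilt Y), Q''.Reduced → ∀ h : X ⟶ Y,
        ((∀ δ ∈ Q''.carrier, (⟨δ.1, h ≫ δ.2⟩ : MorFrom X) ∈ Q'.carrier) ↔
          (∀ i, ∀ δ ∈ Q''.carrier,
            (⟨δ.1, (f i ≫ h) ≫ δ.2⟩ : MorFrom (A i).base) ∈ (A i).filt.carrier))) :=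
  push_forward_filtration_general hEM A hA X f

end FilteredCats
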